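/- Let p ∈ ℚ with -1 ≤ p ≤ 0 and set p' = -p/(2p+1) ∈ ℚ∞, with the convention p' = ∞ when p = -1/2 (equivalently, in coprime coordinates p' is the normalization of the pair (-a(p), 2a(p)+b(p))). Then: if c(p) ≤ 2 then c(p') ≤ 2, and if c(p) > 2 then c(p') < c(p). -/

import Mathlib

open Matrix

abbrev V6 := Fin 6 → ℤ

def C6 : Matrix (Fin 6) (Fin 6) ℤ :=
  !![1,0,-1,-1,1,1;
     0,1,-1,-1,1,1;
     0,0,1,0,-1,-1;
     0,0,0,1,-1,-1;
     0,0,0,0,1,0;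
     0,0,0,0,0,1]

/-- The bilinear form `⟨x,y⟩ = xᵀ C y` on `ℤ^6`. -/
def form (x y : V6) : ℤ := x ⬝ᵥ C6.mulVec y

/-- The quaternion `i`. -/
def qI : Quaternion ℤ := ⟨0,1,0,0⟩
/-- The quaternion `j`. -/
def qJ : Quaternion ℤ := ⟨0,0,1,0⟩
/-- The quaternion `k`. -/
def qK : Quaternion ℤ := ⟨0,0,0,1⟩

instance : DecidableEq (Quaternion ℤ) := fun x y =>
  decidable_of_iff (x.re = y.re ∧ x.imI = y.imI ∧ x.imJ = y.imJ ∧ x.imK = y.imK)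
    ⟨fun ⟨h1, h2, h3, h4⟩ => QuaternionAlgebra.ext h1 h2 h3 h4,
     fun h => by subst h; exact ⟨rfl, rfl, rfl, rfl⟩⟩

/-- The quaternion group `H = {±1, ±i, ±j, ±k}`. -/
def Hset : Finset (Quaternion ℤ) := {1, -1, qI, -qI, qJ, -qJ, qK, -qK}

/-- The subset `H⁺ = {1, i, j, k}`. -/
def Hplus : Finset (Quaternion ℤ) := {1, qI, qJ, qK}

/-- Index type for the three special slopes `0`, `1`, `∞`. -/
inductive Ty | zero | one | inf
deriving DecidableEq

def h0 : V6 := ![0,0,1,1,1,1]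
def h1 : V6 := ![1,1,2,2,1,1]
def hinf : V6 := ![1,1,1,1,0,0]

def hTy : Ty → V6
  | .zero => h0
  | .one => h1
  | .inf => hinf

/-- The vectors `v_t^x` for `t ∈ {0,1,∞}` and `x ∈ H⁺`. -/
def vposTy : Ty → Quaternion ℤ → V6
  | .zero, x => if x = 1 then ![0,0,1,0,1,0] else if x = qI then ![-1,0,0,0,0,0]
      else if x = qJ then ![0,0,1,0,0,1] else ![0,1,1,1,1,1]
  | .one, x => if x = 1 then ![1,0,1,1,1,0] else if x = qI then ![0,1,1,1,1,0]
      else if x = qJ then ![0,0,1,0,0,0] else ![1,1,2,1,1,1]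
  | .inf, x => if x = 1 then ![1,0,0,1,0,0] else if x = qI then ![1,1,1,1,1,0]
      else if x = qJ then ![0,0,0,0,0,-1] else ![1,0,1,0,0,0]

/-- The vectors `v_t^x` for `t ∈ {0,1,∞}` and `x ∈ H`, with `v_t^{-x} = h_t - v_t^x`. -/
def vTy (t : Ty) (x : Quaternion ℤ) : V6 :=
  if x ∈ Hplus then vposTy t x else hTy t - vposTy t (-x)

/-- `a(q)`: numerator, with `a(∞) = 1`. -/
def aQ : WithTop ℚ → ℤ := WithTop.recTopCoe 1 Rat.num

/-- `b(q)`: denominator, with `b(∞) = 0`. -/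
def bQ : WithTop ℚ → ℤ := WithTop.recTopCoe 0 (fun x => (x.den : ℤ))

/-- The type `t(q) ∈ {0,1,∞}` of a slope `q`. -/
def tyQ (q : WithTop ℚ) : Ty :=
  if aQ q % 2 = 0 then Ty.zero else if bQ q % 2 = 1 then Ty.one else Ty.inf

/-- `⌊n⌋₂ = n/2` for even `n` and `(n-1)/2` for odd `n`. -/
def half2 (n : ℤ) : ℤ := if Even n then n / 2 else (n - 1) / 2

/-- `h_q = b(q)·h₀ + a(q)·h_∞`. -/
def hQ (q : WithTop ℚ) : V6 := bQ q • h0 + aQ q • hinf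

/-- `v_q^x = v_{t(q)}^x + ⌊b(q)⌋₂·h₀ + ⌊a(q)⌋₂·h_∞`. -/
def vQ (q : WithTop ℚ) (x : Quaternion ℤ) : V6 :=
  vTy (tyQ q) x + half2 (bQ q) • h0 + half2 (aQ q) • hinf

/-- `rk e = ⟨e, h_∞⟩`. -/
def rk (e : V6) : ℤ := form e hinf

/-- `deg e = ⟨h₀, e⟩`. -/
def degV (e : V6) : ℤ := form h0 e

/-- `e` is positive if `rk e > 0`, or `rk e = 0` and `deg e > 0`. -/
def PosV (e : V6) : Prop := 0 < rk e ∨ (rk e = 0 ∧ 0 < degV e)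

/-- `d(p,q) = |a(q)b(p) - a(p)b(q)|`. -/
def dQ (p q : WithTop ℚ) : ℤ := |aQ q * bQ p - aQ p * bQ q|

/-- Complexity `c(p) = |a(p)| + |b(p)| + |a(p)+b(p)|`. -/
def cpx (p : WithTop ℚ) : ℤ := |aQ p| + |bQ p| + |aQ p + bQ p|


/-- The unfolding map `p ↦ -p/(2p+1)`, with value `∞` at `p = -1/2`. -/
def muD (p : ℚ) : WithTop ℚ :=
  if 2 * p + 1 = 0 then ⊤ else (((-p) / (2 * p + 1) : ℚ) : WithTop ℚ)

/-!
Write `p = a/b` in lowest terms. The map `(a, b) ↦ (-a, 2a + b)` is unimodular, so it sends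
coprime pairs to coprime pairs and `c(p') = |a| + |2a + b| + |a + b|`. For `-b ≤ a ≤ 0` this is
`b + |2a + b| ≤ 2b = c(p)`, with equality only when `a ∈ {0, -b}`, i.e. `p ∈ {0, -1}`, where
`c(p) = 2`.
-/

lemma cpx_coe (p : ℚ) : cpx p = |p.num| + p.den + |p.num + p.den| := by
  simp [cpx, aQ, bQ]

lemma cpx_coe_intCast_div {x y : ℤ} (hxy : IsCoprime x y) (hy : y ≠ 0) :
    cpx ((x / y : ℚ) : WithTop ℚ) = |x| + |y| + |x + y| := by
  wlog hy : 0 < y generalizing x y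
  · have h := this hxy.neg_neg (neg_ne_zero.mpr ‹y ≠ 0›) (by omega)
    rw [Int.cast_neg, Int.cast_neg, neg_div_neg_eq] at h
    rw [h, abs_neg, abs_neg, ← neg_add, abs_neg]
  have hcop : x.natAbs.Coprime y.natAbs := Int.isCoprime_iff_gcd_eq_one.mp hxy
  rw [cpx_coe, Rat.num_div_eq_of_coprime hy hcop, Rat.den_div_eq_of_coprime hy hcop,
    abs_of_pos hy]

lemma cpx_muD (p : ℚ) :
    cpx (muD p) = |p.num| + |2 * p.num + p.den| + |p.num + p.den| := by
  by_cases hp : 2 * p + 1 = 0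
  · obtain rfl : p = -1 / 2 := by linarith
    rw [muD, if_pos hp]
    norm_num [cpx, aQ, bQ]
  have hden : (2 * p.num + p.den : ℤ) = (2 * p + 1) * p.den := by
    push_cast
    rw [← Rat.mul_den_eq_num]
    ring
  have hne : 2 * p.num + (p.den : ℤ) ≠ 0 := by
    have : ((2 * p.num + p.den : ℤ) : ℚ) ≠ 0 := by
      rw [hden]; exact mul_ne_zero hp (by positivity)
    exact_mod_cast this
  have hcop : IsCoprime (-p.num) (2 * p.num + p.den) := by
    have := (p.isCoprime_num_den.add_mul_left_right 2).neg_left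
    rwa [add_comm, mul_comm] at this
  have hmu : muD p = (((-p.num : ℤ) / (2 * p.num + p.den : ℤ) : ℚ) : WithTop ℚ) := by
    rw [muD, if_neg hp, hden, Int.cast_neg, ← Rat.mul_den_eq_num,
      ← neg_mul, mul_div_mul_right _ _ (by positivity : (p.den : ℚ) ≠ 0)]
  rw [hmu, cpx_coe_intCast_div hcop hne, abs_neg]
  ring_nf

lemma cpx_muD_le_cpx {p : ℚ} (h1 : -1 ≤ p) (h2 : p ≤ 0) : cpx (muD p) ≤ cpx p := by
  have hlow : -(p.den : ℤ) ≤ p.num := by simpa using (Rat.le_iff _ _).mp h1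
  have hup : p.num ≤ 0 := Rat.num_nonpos.mpr h2
  rw [cpx_muD, cpx_coe]
  simp only [abs_eq_max_neg]
  omega

lemma cpx_muD_lt_cpx {p : ℚ} (h1 : -1 < p) (h2 : p < 0) : cpx (muD p) < cpx p := by
  have hlow : -(p.den : ℤ) < p.num := by simpa using (Rat.lt_iff _ _).mp h1
  have hup : p.num < 0 := Rat.num_neg.mpr h2
  rw [cpx_muD, cpx_coe]
  simp only [abs_eq_max_neg]
  omega

theorem stmt17 (p : ℚ) (h1 : -1 ≤ p) (h2 : p ≤ 0) :
    (cpx (p : WithTop ℚ) ≤ 2 → cpx (muD p) ≤ 2) ∧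
    (2 < cpx (p : WithTop ℚ) → cpx (muD p) < cpx (p : WithTop ℚ)) := by
  refine ⟨(cpx_muD_le_cpx h1 h2).trans, fun hcpx => cpx_muD_lt_cpx ?_ ?_⟩
  · refine h1.lt_of_ne ?_
    rintro rfl
    exact absurd hcpx (by decide)
  · refine h2.lt_of_ne ?_
    rintro rfl
    exact absurd hcpx (by decide)
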